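/- Combining the digit truncation bound with the perturbation bound: for Q* with entries in (-1,1), base r ≥ 2, and k digit matrices, if x̂ is an optimal solution of the truncated matrix Q̂ = Σ_{m=1}^k M_m/r^m and x* is optimal for Q*, then x̂ᵀQ*x̂ ≤ x*ᵀQ*x* + 2n²/r^k. -/

import Mathlib

open Matrix

-- floor division step
lemma floor_pow_div (r : ℕ) (hr : 2 ≤ r) (a : ℝ) (ha : 0 ≤ a) (m : ℕ) :
    ⌊a * (r:ℝ) ^ (m+1)⌋ / (r:ℤ) = ⌊a * (r:ℝ) ^ m⌋ := by
  have hr0 : (0:ℤ) < (r:ℤ) := by exact_mod_cast Nat.lt_of_lt_of_le (by norm_num) hr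
  have hrR : (0:ℝ) < (r:ℝ) := by exact_mod_cast hr0
  set b := ⌊a * (r:ℝ) ^ (m+1)⌋ with hb
  set c := ⌊a * (r:ℝ) ^ m⌋ with hc
  have h1 : c ≤ b / (r:ℤ) := by
    rw [Int.le_ediv_iff_mul_le hr0]
    rw [hb, Int.le_floor]
    push_cast
    calc ((c:ℝ)) * r ≤ (a * (r:ℝ)^m) * r := by
          exact mul_le_mul_of_nonneg_right (Int.floor_le _) hrR.le
      _ = a * (r:ℝ)^(m+1) := by ring
  have h2 : b / (r:ℤ) < c + 1 := by
    rw [Int.ediv_lt_iff_lt_mul hr0]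
    have : (b:ℝ) < ((c:ℝ) + 1) * r := by
      calc (b:ℝ) ≤ a * (r:ℝ)^(m+1) := Int.floor_le _
        _ = (a * (r:ℝ)^m) * r := by ring
        _ < ((c:ℝ) + 1) * r := by
            exact mul_lt_mul_of_pos_right (Int.lt_floor_add_one _) hrR
    exact_mod_cast this
  omega

lemma digitsum (r : ℕ) (hr : 2 ≤ r) (a : ℝ) (ha : 0 ≤ a) (ha1 : a < 1) (k : ℕ) :
    ∑ m ∈ Finset.Icc 1 k, ((⌊a * (r:ℝ) ^ m⌋ % (r:ℤ) : ℤ) : ℝ) / (r:ℝ) ^ m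
      = (⌊a * (r:ℝ) ^ k⌋ : ℝ) / (r:ℝ) ^ k := by
  have hrR : (0:ℝ) < (r:ℝ) := by
    exact_mod_cast Nat.lt_of_lt_of_le (by norm_num) hr
  induction k with
  | zero => simp [Int.floor_eq_zero_iff.2 (Set.mem_Ico.mpr ⟨ha, ha1⟩)]
  | succ k ih =>
    rw [Finset.sum_Icc_succ_top (by omega), ih]
    have hmod : (⌊a * (r:ℝ) ^ (k+1)⌋ % (r:ℤ) : ℤ)
        = ⌊a * (r:ℝ) ^ (k+1)⌋ - (r:ℤ) * ⌊a * (r:ℝ) ^ k⌋ := by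
      rw [Int.emod_def, floor_pow_div r hr a ha]
    rw [hmod]
    have h1 : (r:ℝ)^k ≠ 0 := by positivity
    have h2 : (r:ℝ)^(k+1) ≠ 0 := by positivity
    push_cast
    field_simp
    ring

lemma quad_pert {n : ℕ} (A B : Matrix (Fin n) (Fin n) ℝ) (x : Fin n → ℝ)
    (hx : ∀ i, x i = 0 ∨ x i = 1) (ε : ℝ) (hε : 0 ≤ ε)
    (h : ∀ i j, A i j - B i j ≤ ε) :
    x ⬝ᵥ A.mulVec x ≤ x ⬝ᵥ B.mulVec x + (n:ℝ)^2 * ε := by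
  have hA : x ⬝ᵥ A.mulVec x = ∑ i, ∑ j, x i * (A i j * x j) := by
    simp [dotProduct, Matrix.mulVec, Finset.mul_sum]
  have hB : x ⬝ᵥ B.mulVec x = ∑ i, ∑ j, x i * (B i j * x j) := by
    simp [dotProduct, Matrix.mulVec, Finset.mul_sum]
  have key : ∑ i, ∑ j, x i * (A i j * x j)
      ≤ (∑ i, ∑ j, x i * (B i j * x j)) + ∑ _i : Fin n, ∑ _j : Fin n, ε := by
    rw [← Finset.sum_add_distrib]
    apply Finset.sum_le_sum; intro i _
    rw [← Finset.sum_add_distrib]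
    apply Finset.sum_le_sum; intro j _
    rcases hx i with h1 | h1 <;> rcases hx j with h2 | h2 <;>
      simp [h1, h2] <;> linarith [h i j]
  simp only [Finset.sum_const, Finset.card_univ, Fintype.card_fin, nsmul_eq_mul] at key
  rw [hA, hB]
  refine key.trans (le_of_eq ?_)
  push_cast
  ring

theorem stmt_15 (n r k : ℕ) (hr : 2 ≤ r) (hk : 1 ≤ k)
    (Qstar : Matrix (Fin n) (Fin n) ℝ)
    (hQ : ∀ i j, Qstar i j ∈ Set.Ioo (-1 : ℝ) 1)
    (M : ℕ → Matrix (Fin n) (Fin n) ℝ)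
    (hM : ∀ m i j, M m i j =
      Real.sign (Qstar i j) * ((⌊|Qstar i j| * (r : ℝ) ^ m⌋ % (r : ℤ) : ℤ) : ℝ))
    (Qhat : Matrix (Fin n) (Fin n) ℝ)
    (hQhat : ∀ i j, Qhat i j = ∑ m ∈ Finset.Icc 1 k, M m i j / (r : ℝ) ^ m)
    (xhat xstar : Fin n → ℝ)
    (hxhat : ∀ i, xhat i = 0 ∨ xhat i = 1) (hxstar : ∀ i, xstar i = 0 ∨ xstar i = 1)
    (hxhatmin : ∀ x : Fin n → ℝ, (∀ i, x i = 0 ∨ x i = 1) →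
      xhat ⬝ᵥ Qhat.mulVec xhat ≤ x ⬝ᵥ Qhat.mulVec x)
    (hxstarmin : ∀ x : Fin n → ℝ, (∀ i, x i = 0 ∨ x i = 1) →
      xstar ⬝ᵥ Qstar.mulVec xstar ≤ x ⬝ᵥ Qstar.mulVec x) :
    xhat ⬝ᵥ Qstar.mulVec xhat ≤ xstar ⬝ᵥ Qstar.mulVec xstar + 2 * n ^ 2 / (r : ℝ) ^ k := by
  have hrR : (0:ℝ) < (r:ℝ) := by
    exact_mod_cast Nat.lt_of_lt_of_le (by norm_num) hr
  have hrk : (0:ℝ) < (r:ℝ) ^ k := by positivity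
  have hQhat' : ∀ i j, Qhat i j
      = Real.sign (Qstar i j) * ((⌊|Qstar i j| * (r:ℝ)^k⌋ : ℝ) / (r:ℝ)^k) := by
    intro i j
    have habs1 : |Qstar i j| < 1 := abs_lt.2 ⟨(hQ i j).1, (hQ i j).2⟩
    rw [hQhat, ← digitsum r hr |Qstar i j| (abs_nonneg _) habs1 k, Finset.mul_sum]
    apply Finset.sum_congr rfl
    intro m _
    rw [hM]; ring
  have hd : ∀ i j, |Qstar i j - Qhat i j| ≤ 1 / (r:ℝ)^k := by
    intro i j
    rw [hQhat' i j]
    rcases eq_or_ne (Qstar i j) 0 with h0 | h0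
    · simp [h0]
    · have hs : Real.sign (Qstar i j) * |Qstar i j| = Qstar i j := by
        rcases lt_or_gt_of_ne h0 with hlt | hgt
        · rw [Real.sign_of_neg hlt, abs_of_neg hlt]; ring
        · rw [Real.sign_of_pos hgt, abs_of_pos hgt]; ring
      have habs : |Real.sign (Qstar i j)| = 1 := by
        rcases lt_or_gt_of_ne h0 with hlt | hgt
        · rw [Real.sign_of_neg hlt]; norm_num
        · rw [Real.sign_of_pos hgt]; norm_num
      have heq : Qstar i j - Real.sign (Qstar i j) * ((⌊|Qstar i j| * (r:ℝ)^k⌋ : ℝ) / (r:ℝ)^k)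
          = Real.sign (Qstar i j)
            * (|Qstar i j| - (⌊|Qstar i j| * (r:ℝ)^k⌋:ℝ)/(r:ℝ)^k) := by
        rw [mul_sub, hs]
      rw [heq, abs_mul, habs, one_mul]
      set t := |Qstar i j|
      have hub : (⌊t*(r:ℝ)^k⌋:ℝ) ≤ t*(r:ℝ)^k := Int.floor_le _
      have hlb : t*(r:ℝ)^k < (⌊t*(r:ℝ)^k⌋:ℝ) + 1 := Int.lt_floor_add_one _
      have h1 : (⌊t*(r:ℝ)^k⌋:ℝ)/(r:ℝ)^k ≤ t := by
        rw [div_le_iff₀ hrk]; exact hub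
      have h2 : t ≤ (⌊t*(r:ℝ)^k⌋:ℝ)/(r:ℝ)^k + 1/(r:ℝ)^k := by
        rw [← add_div, le_div_iff₀ hrk]; linarith
      rw [abs_le]
      constructor <;> linarith
  have hε : (0:ℝ) ≤ 1/(r:ℝ)^k := by positivity
  have s1 := quad_pert Qstar Qhat xhat hxhat _ hε
    (fun i j => (abs_le.1 (hd i j)).2)
  have s3 := quad_pert Qhat Qstar xstar hxstar _ hε
    (fun i j => by linarith [(abs_le.1 (hd i j)).1])
  have s2 := hxhatmin xstar hxstar
  have hfin : 2 * (n:ℝ) ^ 2 / (r:ℝ) ^ k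
      = (n:ℝ)^2 * (1/(r:ℝ)^k) + (n:ℝ)^2 * (1/(r:ℝ)^k) := by ring
  linarith
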